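/- Let Q be a skewed-gentle polarized quiver and k a field with char k ≠ 2. The map φ_Q : kQ → kQ̃/⟨R̃⟩ determined by e_i ↦ Σ_{σ∈S(i)} e_{(i,σ)} for all vertices i, α ↦ Σ_{τ∈S(t(α)), σ∈S(s(α))} τα_σ for all ordinary arrows α, and ε_i ↦ e_{(i,+)} − e_{(i,−)} for all special loops ε_i, is a k-algebra isomorphism; its inverse satisfies φ_Q^{-1}(e_{(i,±)}) = (1/2)(e_i ± ε_i) for every vertex i carrying a special loop. -/

import Mathlib

/- Core combinatorics of polarized quivers, letters, words, strings and bands,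
   following Geiß, "Homomorphisms between representations of skewed-gentle algebras". -/

namespace SG

open Classical

/-- Signs: `true` stands for `+1`, `false` for `-1`. -/
abbrev Sign := Bool

/-- The raw data of a polarized quiver: vertices, arrows, a set of special arrows,
and polarized source/target maps with values in `V × {±1}`. -/
structure PolQuiv where
  V : Type
  A : Type
  special : A → Prop
  src : A → V × Sign
  tgt : A → V × Sign

/-- The five kinds of letters associated to a polarized quiver:
direct (ordinary), inverse, special, trivial and trivial inverse letters. -/
inductive PLetter (V A : Type) where
  | ord : A → PLetter V A
  | inv : A → PLetter V A
  | sp : A → PLetter V A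
  | triv : V → Sign → PLetter V A
  | trivInv : V → Sign → PLetter V A

namespace PolQuiv

variable (Q : PolQuiv)

/-- `-(i,ρ) = (i,-ρ)`. -/
def nneg (p : Q.V × Sign) : Q.V × Sign := (p.1, !p.2)

/-- The axioms of a polarized quiver: finiteness, injectivity of the polarized source and
target maps, special arrows have polarization `-1` at both ends, and every special arrow
has a unique dual special arrow. -/
def IsPolarized : Prop :=
  Finite Q.V ∧ Finite Q.A ∧
  Function.Injective Q.src ∧ Function.Injective Q.tgt ∧
  (∀ a, Q.special a → (Q.src a).2 = false ∧ (Q.tgt a).2 = false) ∧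
  (∀ a, Q.special a → ∃! a', Q.special a' ∧ Q.src a' = Q.tgt a ∧ Q.tgt a' = Q.src a)

/-- The dual special arrow `ε'` of a special arrow `ε` (junk value on other arrows). -/
noncomputable def dual (a : Q.A) : Q.A :=
  if h : ∃ a', Q.special a' ∧ Q.src a' = Q.tgt a ∧ Q.tgt a' = Q.src a then h.choose else a

/-- An admissible path `a₁ a₂ ⋯ a_l` : `s(aᵢ) = -t(a_{i+1})`. -/
def IsAdmPath (p : List Q.A) : Prop :=
  p ≠ [] ∧ ∀ n a b, p[n]? = some a → p[n + 1]? = some b → Q.src a = Q.nneg (Q.tgt b)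

/-- An admissible polarized quiver has only finitely many admissible paths. -/
def IsAdmissible : Prop := Q.IsPolarized ∧ {p : List Q.A | Q.IsAdmPath p}.Finite

/-- A loop. -/
def IsLoopArr (a : Q.A) : Prop := (Q.src a).1 = (Q.tgt a).1

/-- A skewed-gentle polarized quiver: admissible, and all special arrows are loops. -/
def SkewedGentle : Prop := Q.IsAdmissible ∧ ∀ a, Q.special a → Q.IsLoopArr a

/-- A gentle polarized quiver: admissible with no special arrows. -/
def Gentle : Prop := Q.IsAdmissible ∧ ∀ a, ¬ Q.special a

abbrev Ltr := PLetter Q.V Q.A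
abbrev Wd := List (PLetter Q.V Q.A)

/-- `(i,ρ)` admits trivial letters iff it is not the source of a special arrow. -/
def trivOK (i : Q.V) (ρ : Sign) : Prop := ∀ ε, Q.special ε → Q.src ε ≠ (i, ρ)

/-- Validity of a letter for `Q`. -/
def IsLetter : Q.Ltr → Prop
  | .ord a => ¬ Q.special a
  | .inv a => ¬ Q.special a
  | .sp a => Q.special a
  | .triv i ρ => Q.trivOK i ρ
  | .trivInv i ρ => Q.trivOK i ρ

/-- The (partial) source of a letter; `none` encodes `*`. -/
def lsrc : Q.Ltr → Option (Q.V × Sign)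
  | .ord a => some (Q.src a)
  | .inv a => some (Q.tgt a)
  | .sp a => some ((Q.src a).1, false)
  | .triv _ _ => none
  | .trivInv i ρ => some (i, ρ)

/-- The (partial) target of a letter; `none` encodes `*`. -/
def ltgt : Q.Ltr → Option (Q.V × Sign)
  | .ord a => some (Q.tgt a)
  | .inv a => some (Q.src a)
  | .sp a => some ((Q.tgt a).1, false)
  | .triv i ρ => some (i, ρ)
  | .trivInv _ _ => none

/-- The inverse of a letter; `(ε^*)⁻¹ = (ε')^*`. -/
noncomputable def linv : Q.Ltr → Q.Ltr
  | .ord a => .inv a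
  | .inv a => .ord a
  | .sp a => .sp (Q.dual a)
  | .triv i ρ => .trivInv i ρ
  | .trivInv i ρ => .triv i ρ

/-- The inverse of a word. -/
noncomputable def winv (w : Q.Wd) : Q.Wd := (w.map Q.linv).reverse

/-- A word: all letters valid and `s(wᵢ) = -t(w_{i+1})`. -/
def IsWord (w : Q.Wd) : Prop :=
  (∀ l ∈ w, Q.IsLetter l) ∧
  ∀ n a b, w[n]? = some a → w[n + 1]? = some b →
    ∃ p, Q.lsrc a = some p ∧ Q.ltgt b = some (Q.nneg p)

/-- A word is right inextensible iff its last letter is a trivial letter. -/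
def RightInext (w : Q.Wd) : Prop := ∃ i ρ, w.getLast? = some (.triv i ρ)

/-- A word is left inextensible iff its inverse is right inextensible. -/
def LeftInext (w : Q.Wd) : Prop := Q.RightInext (Q.winv w)

/-- A string: a left and right inextensible word. -/
def IsString (w : Q.Wd) : Prop := Q.IsWord w ∧ Q.LeftInext w ∧ Q.RightInext w

/-- A band: a (nonempty) word `w` such that `ww` is also a word. -/
def IsBand (w : Q.Wd) : Prop := w ≠ [] ∧ Q.IsWord (w ++ w)

/-- A primitive word is not a proper power. -/
def Primitive (w : Q.Wd) : Prop :=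
  ¬ ∃ (v : Q.Wd) (n : ℕ), 2 ≤ n ∧ w = (List.replicate n v).flatten

/-- The rotation `w^{[k+1]} w_{[k]}` of a word. -/
def rot (w : Q.Wd) (k : ℕ) : Q.Wd := w.drop k ++ w.take k

/-- A symmetric string: `w = w⁻¹`. -/
def SymmString (w : Q.Wd) : Prop := Q.IsString w ∧ Q.winv w = w

/-- Primitive bands. -/
def pBa (w : Q.Wd) : Prop := Q.IsBand w ∧ Q.Primitive w

/-- A symmetric (primitive) band: `w⁻¹` is a rotation of `w`. -/
def SymmBand (w : Q.Wd) : Prop := Q.pBa w ∧ ∃ k, Q.winv w = Q.rot w k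

/-- A symmetric primitive band in standard form `ε^* v ζ^* v⁻¹`. -/
def StdSymmBand (w : Q.Wd) : Prop :=
  Q.pBa w ∧ ∃ (a b : Q.A) (v : Q.Wd), Q.special a ∧ Q.special b ∧
    w = .sp a :: (v ++ .sp b :: Q.winv v)

/-- `pBa'`: asymmetric primitive bands together with symmetric primitive bands in standard
form. -/
def pBa' (w : Q.Wd) : Prop :=
  (Q.pBa w ∧ ¬ ∃ k, Q.winv w = Q.rot w k) ∨ Q.StdSymmBand w

/-- The partial order on letters with a common target: `α < 1_{i,ρ} < β⁻¹`. -/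
def letterLT : Q.Ltr → Q.Ltr → Prop
  | .ord a, .triv i ρ => ¬ Q.special a ∧ Q.trivOK i ρ ∧ Q.tgt a = (i, ρ)
  | .ord a, .inv b => ¬ Q.special a ∧ ¬ Q.special b ∧ Q.tgt a = Q.src b
  | .triv i ρ, .inv b => ¬ Q.special b ∧ Q.trivOK i ρ ∧ Q.src b = (i, ρ)
  | _, _ => False

/-- The induced lexicographic order on words. -/
def wordLT (v w : Q.Wd) : Prop :=
  ∃ (p u u' : Q.Wd) (a b : Q.Ltr), v = p ++ a :: u ∧ w = p ++ b :: u' ∧ Q.letterLT a b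

def wordLE (v w : Q.Wd) : Prop := Q.wordLT v w ∨ v = w

/-- The associated gentle polarized quiver `Q̂`: all arrows become ordinary. -/
@[reducible] def hat : PolQuiv := ⟨Q.V, Q.A, fun _ => False, Q.src, Q.tgt⟩

/-- A vertex carrying a special loop. -/
def specialAt (i : Q.V) : Prop := ∃ ε, Q.special ε ∧ (Q.src ε).1 = i

/-- The special loop at a vertex, as an `Option`. -/
noncomputable def sloopL (i : Q.V) : Option Q.A :=
  if h : Q.specialAt i then some h.choose else none

/-- The `Q̂`-letter `ε^{δ1}` at a vertex carrying a special loop (junk otherwise). -/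
noncomputable def epsAt (i : Q.V) (δ : Bool) : Q.Ltr :=
  if h : Q.specialAt i then (if δ then .ord h.choose else .inv h.choose) else .triv i false

/-- The canonical map `F` on letters, from letters of `Q̂` to letters of `Q`. -/
noncomputable def Fmap : Q.Ltr → Q.Ltr
  | .ord a => if Q.special a then .sp a else .ord a
  | .inv a => if Q.special a then .sp (Q.dual a) else .inv a
  | .sp a => .sp a
  | .triv i ρ => if h : ρ = false ∧ Q.specialAt i then .sp h.2.choose else .triv i ρ
  | .trivInv i ρ => if h : ρ = false ∧ Q.specialAt i then .sp h.2.choose else .trivInv i ρ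

/-- `F` on words. -/
noncomputable def Fword (w : Q.Wd) : Q.Wd := w.map Q.Fmap

/-- Punctured letters: trivial letters `1_{i,-1}^{±1}` with a special loop at `i`. -/
def IsPunct : Q.Ltr → Prop
  | .triv i ρ => ρ = false ∧ Q.specialAt i
  | .trivInv i ρ => ρ = false ∧ Q.specialAt i
  | _ => False

def LeftPunct (w : Q.Wd) : Prop := ∃ l, w.head? = some l ∧ Q.IsPunct l
def RightPunct (w : Q.Wd) : Prop := ∃ l, w.getLast? = some l ∧ Q.IsPunct l

open Classical in
/-- The completion `x̄` of a string or band `x` for `Q̂`: apply `F` after reflecting at each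
punctured end. -/
noncomputable def completionW (w : Q.Wd) : Q.Wd :=
  if Q.LeftPunct w then
    if Q.RightPunct w then Q.Fword w ++ Q.Fword (Q.hat.winv ((w.drop 1).dropLast))
    else Q.Fword (Q.hat.winv (w.drop 1)) ++ Q.Fword w
  else
    if Q.RightPunct w then Q.Fword w ++ Q.Fword (Q.hat.winv w.dropLast)
    else Q.Fword w

/-- The letter of `A(w)` at position `k`, for `w` a string: special letters `ε^*` are
replaced by `ε` if `(w_{[k-1]})⁻¹ > w^{[k+1]}` and by `ε⁻¹` if `(w_{[k-1]})⁻¹ < w^{[k+1]}`. -/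
def ALetterStr (w : Q.Wd) (k : ℕ) (xl : Q.Ltr) : Prop :=
  match w[k]? with
  | some (.sp a) =>
      (xl = .ord a ∧ Q.wordLT (w.drop (k + 1)) (Q.winv (w.take k))) ∨
      (xl = .inv a ∧ Q.wordLT (Q.winv (w.take k)) (w.drop (k + 1)))
  | some l => xl = l
  | none => False

/-- The letter of `A(w)` at position `k`, for `w` a band, with the comparison
`w_{[k-1]}⁻¹ (w^{[k+1]})⁻¹` versus `w^{[k+1]} w_{[k-1]}`. -/
def ALetterBand (w : Q.Wd) (k : ℕ) (xl : Q.Ltr) : Prop :=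
  match w[k]? with
  | some (.sp a) =>
      (xl = .ord a ∧
        Q.wordLT (w.drop (k + 1) ++ w.take k) (Q.winv (w.drop (k + 1) ++ w.take k))) ∨
      (xl = .inv a ∧
        Q.wordLT (Q.winv (w.drop (k + 1) ++ w.take k)) (w.drop (k + 1) ++ w.take k))
  | some l => xl = l
  | none => False

/-- `x = A(w)` for an asymmetric string `w`. -/
def AStrAsym (w x : Q.Wd) : Prop :=
  Q.IsString w ∧ Q.winv w ≠ w ∧ x.length = w.length ∧
  ∀ k xl, x[k]? = some xl → Q.ALetterStr w k xl

/-- `x = A(w)` for a symmetric string `w = v ε^* v⁻¹`. -/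
def AStrSym (w x : Q.Wd) : Prop :=
  Q.IsString w ∧ Q.winv w = w ∧
  ∃ (v : Q.Wd) (a : Q.A), Q.special a ∧ w = v ++ .sp a :: Q.winv v ∧
    ∃ y : Q.Wd, y.length = v.length ∧ (∀ k xl, y[k]? = some xl → Q.ALetterStr w k xl) ∧
      x = y ++ [.triv (Q.src a).1 false]

/-- `x = A(w)` for an asymmetric primitive band `w`. -/
def ABandAsym (w x : Q.Wd) : Prop :=
  Q.pBa w ∧ (¬ ∃ k, Q.winv w = Q.rot w k) ∧ x.length = w.length ∧
  ∀ k xl, x[k]? = some xl → Q.ALetterBand w k xl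

/-- `x = A(w)` for a symmetric band in standard form `w = ε_a^* v ε_b^* v⁻¹`. -/
def ABandSym (w x : Q.Wd) : Prop :=
  Q.pBa w ∧ ∃ (a b : Q.A) (v : Q.Wd), Q.special a ∧ Q.special b ∧
    w = .sp a :: (v ++ .sp b :: Q.winv v) ∧
    ∃ y : Q.Wd, y.length = v.length ∧
      (∀ k xl, y[k]? = some xl → Q.ALetterBand w (k + 1) xl) ∧
      x = .trivInv (Q.src a).1 false :: (y ++ [.triv (Q.src b).1 false])

/-- `x = A(w)` for `w ∈ St(Q) ∪ pBa'(Q)`. -/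
def ARel (w x : Q.Wd) : Prop :=
  Q.AStrAsym w x ∨ Q.AStrSym w x ∨ Q.ABandAsym w x ∨ Q.ABandSym w x

/-- Admissible strings for `Q̂` (with respect to `F`), following Qiu–Zhou. -/
def AdmStr (x : Q.Wd) : Prop :=
  Q.hat.IsString x ∧
  (∀ k a, (x[k]? = some (.ord a) ∨ x[k]? = some (.inv a)) → Q.special a →
    Q.hat.winv (x.take k) ≠ x.drop k ∧
    (x[k]? = some (.ord a) ↔ Q.hat.wordLT (x.drop (k + 1)) (Q.hat.winv (x.take k)))) ∧
  (Q.LeftPunct x → Q.RightPunct x →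
    Q.IsBand (Q.completionW x) ∧ Q.Primitive (Q.completionW x))

/-- Admissible bands for `Q̂` (with respect to `F`). -/
def AdmBand (x : Q.Wd) : Prop :=
  Q.hat.IsBand x ∧ Q.hat.Primitive x ∧
  (∀ k a, (x[k]? = some (.ord a) ∨ x[k]? = some (.inv a)) → Q.special a →
    Q.hat.winv (x.drop (k + 1) ++ x.take k) ≠ x.drop (k + 1) ++ x.take k ∧
    (x[k]? = some (.ord a) ↔
      Q.hat.wordLT (x.drop (k + 1) ++ x.take k)
        (Q.hat.winv (x.drop (k + 1) ++ x.take k)))) ∧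
  (Q.IsBand (Q.Fword x) ∧ Q.Primitive (Q.Fword x) ∧
    ¬ ∃ k, Q.winv (Q.Fword x) = Q.rot (Q.Fword x) k)

/-- Admissible words. -/
def IsAdm (x : Q.Wd) : Prop := Q.AdmStr x ∨ Q.AdmBand x

end PolQuiv

end SG

namespace SG

open Classical

namespace PolQuiv

variable (Q : PolQuiv)

/-- The index sets `S(i)`: `{+,-}` (encoded `some true`, `some false`) at vertices with a
special loop, and `{o}` (encoded `none`) otherwise. -/
def SOK (i : Q.V) (σ : Option Bool) : Prop :=
  (Q.specialAt i ∧ (σ = some true ∨ σ = some false)) ∨ (¬ Q.specialAt i ∧ σ = none)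

/-- The vertices `(i,σ)` of the Gabriel quiver `Q̃` of `kQ`. -/
def TV : Type := {p : Q.V × Option Bool // Q.SOK p.1 p.2}

/-- The arrows `_τα_σ` of `Q̃`. -/
def TA : Type :=
  {t : Q.A × Option Bool × Option Bool //
    ¬ Q.special t.1 ∧ Q.SOK (Q.tgt t.1).1 t.2.1 ∧ Q.SOK (Q.src t.1).1 t.2.2}

end PolQuiv

open PolQuiv

variable (k : Type) [Field k] (Q : PolQuiv)

/-- Generators of the skewed-gentle algebra `kQ`: trivial paths and arrows. -/
abbrev GenQ := Q.V ⊕ Q.A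

/-- The defining relations of the skewed-gentle algebra
`kQ = k Q/⟨αβ (ordinary relations), ε'ε - e_{s(ε)}⟩`,
together with the path-algebra relations for the trivial paths. -/
inductive PARel [Fintype Q.V] :
    FreeAlgebra k (GenQ Q) → FreeAlgebra k (GenQ Q) → Prop
  | ee : ∀ i j : Q.V,
      PARel (FreeAlgebra.ι k (Sum.inl i) * FreeAlgebra.ι k (Sum.inl j))
        (if i = j then FreeAlgebra.ι k (Sum.inl i) else 0)
  | et : ∀ a : Q.A,
      PARel (FreeAlgebra.ι k (Sum.inl (Q.tgt a).1) * FreeAlgebra.ι k (Sum.inr a))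
        (FreeAlgebra.ι k (Sum.inr a))
  | es : ∀ a : Q.A,
      PARel (FreeAlgebra.ι k (Sum.inr a) * FreeAlgebra.ι k (Sum.inl (Q.src a).1))
        (FreeAlgebra.ι k (Sum.inr a))
  | one : PARel (∑ i : Q.V, FreeAlgebra.ι k (Sum.inl i)) 1
  | zrel : ∀ a b : Q.A, ¬ Q.special a → ¬ Q.special b → Q.src a = Q.tgt b →
      PARel (FreeAlgebra.ι k (Sum.inr a) * FreeAlgebra.ι k (Sum.inr b)) 0
  | srel : ∀ ε : Q.A, Q.special ε →
      PARel (FreeAlgebra.ι k (Sum.inr (Q.dual ε)) * FreeAlgebra.ι k (Sum.inr ε))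
        (FreeAlgebra.ι k (Sum.inl (Q.src ε).1))

/-- The skewed-gentle algebra `kQ`. -/
abbrev kAlg [Fintype Q.V] := RingQuot (PARel k Q)

/-- Generators of `kQ̃`. -/
abbrev GenT := Q.TV ⊕ Q.TA

/-- The defining relations of `kQ̃/⟨R̃⟩`: the path-algebra relations of `Q̃` together
with the relations `R̃ = {Σ_σ _τα_σ · _σβ_ρ}` for each ordinary relation `αβ` of `kQ`. -/
inductive PARelT [Fintype Q.V] [Fintype Q.A] :
    FreeAlgebra k (GenT Q) → FreeAlgebra k (GenT Q) → Prop
  | ee : ∀ i j : Q.TV,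
      PARelT (FreeAlgebra.ι k (Sum.inl i) * FreeAlgebra.ι k (Sum.inl j))
        (if i = j then FreeAlgebra.ι k (Sum.inl i) else 0)
  | et : ∀ t : Q.TA,
      PARelT (FreeAlgebra.ι k (Sum.inl ⟨((Q.tgt t.1.1).1, t.1.2.1), t.2.2.1⟩) *
          FreeAlgebra.ι k (Sum.inr t))
        (FreeAlgebra.ι k (Sum.inr t))
  | es : ∀ t : Q.TA,
      PARelT (FreeAlgebra.ι k (Sum.inr t) *
          FreeAlgebra.ι k (Sum.inl ⟨((Q.src t.1.1).1, t.1.2.2), t.2.2.2⟩))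
        (FreeAlgebra.ι k (Sum.inr t))
  | one :
      PARelT (∑ p : Q.V × Option Bool,
          if h : Q.SOK p.1 p.2 then FreeAlgebra.ι k (Sum.inl ⟨p, h⟩) else 0) 1
  | rtilde : ∀ (a b : Q.A) (ha : ¬ Q.special a) (hb : ¬ Q.special b)
      (hab : Q.src a = Q.tgt b)
      (τ : Option Bool) (hτ : Q.SOK (Q.tgt a).1 τ)
      (ρ : Option Bool) (hρ : Q.SOK (Q.src b).1 ρ),
      PARelT (∑ σ : Option Bool,
          if h : Q.SOK (Q.tgt b).1 σ then
            FreeAlgebra.ι k (Sum.inr ⟨(a, τ, σ), ha, hτ, by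
              rw [show (Q.src a).1 = (Q.tgt b).1 from congrArg Prod.fst hab]
              exact h⟩) *
            FreeAlgebra.ι k (Sum.inr ⟨(b, σ, ρ), hb, h, hρ⟩)
          else 0) 0

/-- The algebra `kQ̃/⟨R̃⟩`. -/
abbrev kAlgT [Fintype Q.V] [Fintype Q.A] := RingQuot (PARelT k Q)

/-! Since `2` is invertible and `ε_i² = e_i`, the elements `(e_i ± ε_i)/2` split `e_i` into two
orthogonal idempotents at each special vertex; together with the `e_i` at ordinary vertices they
form a complete set of orthogonal idempotents of `kQ` indexed by `Q̃₀`. Cutting an ordinary arrow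
`α` by them gives elements `e_τ α e_σ` satisfying the relations of `Q̃`, and an ordinary relation
`αβ = 0` becomes `Σ_σ (e_τ α e_σ)(e_σ β e_ρ) = e_τ α β e_ρ = 0`, which is `R̃`. This defines the
inverse of `φ_Q`, and both composites fix the generators.

Vertices and arrows of `Q̃` are extended by zero to all labels in `Option Bool`, so that the
sums over `S(i)` become sums over `Option Bool` without side conditions. -/

namespace PolQuiv.SkewedGentle

variable {Q : PolQuiv}

theorem src_eq_of_special (hQ : Q.SkewedGentle) {ε : Q.A} (hε : Q.special ε) :
    Q.src ε = ((Q.src ε).1, false) := by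
  obtain ⟨⟨⟨-, -, -, -, hpol, -⟩, -⟩, -⟩ := hQ
  exact Prod.ext rfl (hpol ε hε).1

theorem tgt_eq_of_special (hQ : Q.SkewedGentle) {ε : Q.A} (hε : Q.special ε) :
    Q.tgt ε = ((Q.src ε).1, false) := by
  obtain ⟨⟨⟨-, -, -, -, hpol, -⟩, -⟩, hloop⟩ := hQ
  exact Prod.ext (hloop ε hε).symm (hpol ε hε).2

theorem special_eq_of_src_fst_eq (hQ : Q.SkewedGentle) {ε ε' : Q.A} (hε : Q.special ε)
    (hε' : Q.special ε') (h : (Q.src ε).1 = (Q.src ε').1) : ε = ε' :=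
  hQ.1.1.2.2.1 <| by rw [hQ.src_eq_of_special hε, hQ.src_eq_of_special hε', h]

theorem sloopL_src_of_special (hQ : Q.SkewedGentle) {ε : Q.A} (hε : Q.special ε) :
    Q.sloopL (Q.src ε).1 = some ε := by
  have h : Q.specialAt (Q.src ε).1 := ⟨ε, hε, rfl⟩
  rw [sloopL, dif_pos h, hQ.special_eq_of_src_fst_eq h.choose_spec.1 hε h.choose_spec.2]

theorem dual_eq_self (hQ : Q.SkewedGentle) {ε : Q.A} (hε : Q.special ε) : Q.dual ε = ε := by
  have hex : ∃ ε', Q.special ε' ∧ Q.src ε' = Q.tgt ε ∧ Q.tgt ε' = Q.src ε :=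
    (hQ.1.1.2.2.2.2.2 ε hε).exists
  rw [PolQuiv.dual, dif_pos hex]
  obtain ⟨hs, hsrc, -⟩ := hex.choose_spec
  exact hQ.special_eq_of_src_fst_eq hs hε (by rw [hsrc, hQ.tgt_eq_of_special hε])

end PolQuiv.SkewedGentle

section Halves

variable {k A : Type*} [Field k] [Ring A] [Algebra k A] {u x : A}

theorem half_add_mul_half_add (h2 : (2 : k) ≠ 0) (hu : u * u = u) (hux : u * x = x)
    (hxu : x * u = x) (hxx : x * x = u) :
    ((2⁻¹ : k) • (u + x)) * ((2⁻¹ : k) • (u + x)) = (2⁻¹ : k) • (u + x) := by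
  have : (u + x) * (u + x) = (2 : k) • (u + x) := by
    rw [add_mul, mul_add, mul_add, hu, hux, hxu, hxx, two_smul]; abel
  rw [smul_mul_smul_comm, this, smul_smul, mul_assoc, inv_mul_cancel₀ h2, mul_one]

theorem half_add_mul_half_sub (hu : u * u = u) (hux : u * x = x) (hxu : x * u = x)
    (hxx : x * x = u) : ((2⁻¹ : k) • (u + x)) * ((2⁻¹ : k) • (u - x)) = 0 := by
  rw [smul_mul_smul_comm, add_mul, mul_sub, mul_sub, hu, hux, hxu, hxx]
  simp

theorem half_add_add_half_sub (h2 : (2 : k) ≠ 0) :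
    (2⁻¹ : k) • (u + x) + (2⁻¹ : k) • (u - x) = u := by
  rw [← smul_add, add_add_sub_cancel, ← two_smul k, smul_smul, inv_mul_cancel₀ h2, one_smul]

theorem half_add_sub_half_sub (h2 : (2 : k) ≠ 0) :
    (2⁻¹ : k) • (u + x) - (2⁻¹ : k) • (u - x) = x := by
  rw [← smul_sub, add_sub_sub_cancel, ← two_smul k, smul_smul, inv_mul_cancel₀ h2, one_smul]

theorem half_mul_half_of_sq_eq (h2 : (2 : k) ≠ 0) (hu : u * u = u) (hux : u * x = x)
    (hxu : x * u = x) (hxx : x * x = u) (b c : Bool) :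
    ((2⁻¹ : k) • (if b then u + x else u - x)) *
        ((2⁻¹ : k) • (if c then u + x else u - x)) =
      if b = c then (2⁻¹ : k) • (if b then u + x else u - x) else 0 := by
  have hux' : u * -x = -x := by rw [mul_neg, hux]
  have hxu' : -x * u = -x := by rw [neg_mul, hxu]
  have hxx' : -x * -x = u := by rw [neg_mul_neg, hxx]
  cases b <;> cases c <;> simp only [Bool.false_eq_true, ↓reduceIte, sub_eq_add_neg]
  · exact half_add_mul_half_add h2 hu hux' hxu' hxx'
  · simpa using half_add_mul_half_sub (k := k) hu hux' hxu' hxx'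
  · simpa [sub_eq_add_neg] using half_add_mul_half_sub (k := k) hu hux hxu hxx
  · exact half_add_mul_half_add h2 hu hux hxu hxx

theorem half_smul_add_add_sub (h2 : (2 : k) ≠ 0) (p q : A) :
    (2⁻¹ : k) • (p + q + (p - q)) = p := by
  rw [add_add_sub_cancel, ← two_smul k, smul_smul, inv_mul_cancel₀ h2, one_smul]

theorem half_smul_add_sub_sub (h2 : (2 : k) ≠ 0) (p q : A) :
    (2⁻¹ : k) • (p + q - (p - q)) = q := by
  rw [add_sub_sub_cancel, ← two_smul k, smul_smul, inv_mul_cancel₀ h2, one_smul]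

end Halves

section PathAlgebra

variable {k Q} [Fintype Q.V]

variable (k) in
noncomputable def vertex (i : Q.V) : kAlg k Q :=
  RingQuot.mkAlgHom k (PARel k Q) (FreeAlgebra.ι k (Sum.inl i))

variable (k) in
noncomputable def arrow (a : Q.A) : kAlg k Q :=
  RingQuot.mkAlgHom k (PARel k Q) (FreeAlgebra.ι k (Sum.inr a))

theorem vertex_mul_vertex (i j : Q.V) :
    vertex k i * vertex k j = if i = j then vertex k i else 0 := by
  simpa [vertex, apply_ite (RingQuot.mkAlgHom k (PARel k Q))] using
    RingQuot.mkAlgHom_rel k (PARel.ee (k := k) i j)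

theorem vertex_tgt_mul_arrow (a : Q.A) : vertex k (Q.tgt a).1 * arrow k a = arrow k a := by
  simpa [vertex, arrow] using RingQuot.mkAlgHom_rel k (PARel.et (k := k) a)

theorem arrow_mul_vertex_src (a : Q.A) : arrow k a * vertex k (Q.src a).1 = arrow k a := by
  simpa [vertex, arrow] using RingQuot.mkAlgHom_rel k (PARel.es (k := k) a)

theorem sum_vertex : ∑ i : Q.V, vertex k i = 1 := by
  simpa [vertex] using RingQuot.mkAlgHom_rel k (PARel.one (k := k) (Q := Q))

theorem arrow_mul_arrow_eq_zero {a b : Q.A} (ha : ¬ Q.special a) (hb : ¬ Q.special b)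
    (hab : Q.src a = Q.tgt b) : arrow k a * arrow k b = 0 := by
  simpa [arrow] using RingQuot.mkAlgHom_rel k (PARel.zrel (k := k) a b ha hb hab)

theorem arrow_mul_self_of_special (hQ : Q.SkewedGentle) {ε : Q.A} (hε : Q.special ε) :
    arrow k ε * arrow k ε = vertex k (Q.src ε).1 := by
  simpa [arrow, vertex, hQ.dual_eq_self hε] using
    RingQuot.mkAlgHom_rel k (PARel.srel (k := k) ε hε)

variable (k) in
noncomputable def loop (i : Q.V) : kAlg k Q := (Q.sloopL i).elim 0 (arrow k)

theorem loop_src_of_special (hQ : Q.SkewedGentle) {ε : Q.A} (hε : Q.special ε) :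
    loop k (Q.src ε).1 = arrow k ε := by
  rw [loop, hQ.sloopL_src_of_special hε, Option.elim_some]

section SpecialVertex

variable (hQ : Q.SkewedGentle) {i : Q.V} (hi : Q.specialAt i)
include hQ hi

theorem vertex_mul_loop : vertex k i * loop k i = loop k i := by
  obtain ⟨ε, hε, rfl⟩ := hi
  rw [loop_src_of_special hQ hε, hQ.2 ε hε, vertex_tgt_mul_arrow]

theorem loop_mul_vertex : loop k i * vertex k i = loop k i := by
  obtain ⟨ε, hε, rfl⟩ := hi
  rw [loop_src_of_special hQ hε, arrow_mul_vertex_src]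

theorem loop_mul_loop : loop k i * loop k i = vertex k i := by
  obtain ⟨ε, hε, rfl⟩ := hi
  rw [loop_src_of_special hQ hε, arrow_mul_self_of_special hQ hε]

end SpecialVertex

variable (k) in
/-- `φ_Q⁻¹(e_p)`, extended by zero to the pairs `p` that are not vertices of `Q̃`. -/
noncomputable def halfVertex : Q.V × Option Bool → kAlg k Q
  | (i, none) => if Q.specialAt i then 0 else vertex k i
  | (i, some b) => if Q.specialAt i then
      (2⁻¹ : k) • (if b then vertex k i + loop k i else vertex k i - loop k i)
    else 0

theorem halfVertex_eq_zero {p : Q.V × Option Bool} (hp : ¬ Q.SOK p.1 p.2) :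
    halfVertex k p = 0 := by
  obtain ⟨i, _ | b⟩ := p <;> by_cases hi : Q.specialAt i <;> simp_all [halfVertex, PolQuiv.SOK]

theorem halfVertex_src_of_special (hQ : Q.SkewedGentle) {ε : Q.A} (hε : Q.special ε)
    (b : Bool) : halfVertex k ((Q.src ε).1, some b) = (2⁻¹ : k) •
      (if b then vertex k (Q.src ε).1 + arrow k ε else vertex k (Q.src ε).1 - arrow k ε) := by
  rw [halfVertex, if_pos ⟨ε, hε, rfl⟩, loop_src_of_special hQ hε]

theorem vertex_mul_halfVertex (hQ : Q.SkewedGentle) (i : Q.V) (σ : Option Bool) :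
    vertex k i * halfVertex k (i, σ) = halfVertex k (i, σ) := by
  by_cases hi : Q.specialAt i <;> rcases σ with _ | b <;>
    simp [halfVertex, hi, vertex_mul_vertex, mul_add, mul_sub, vertex_mul_loop hQ]

theorem halfVertex_mul_vertex (hQ : Q.SkewedGentle) (i : Q.V) (σ : Option Bool) :
    halfVertex k (i, σ) * vertex k i = halfVertex k (i, σ) := by
  by_cases hi : Q.specialAt i <;> rcases σ with _ | b <;>
    simp [halfVertex, hi, vertex_mul_vertex, add_mul, sub_mul, loop_mul_vertex hQ]

theorem halfVertex_mul_halfVertex (hQ : Q.SkewedGentle) (h2 : (2 : k) ≠ 0)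
    (p q : Q.V × Option Bool) :
    halfVertex k p * halfVertex k q = if p = q then halfVertex k p else 0 := by
  obtain ⟨i, σ⟩ := p
  obtain ⟨j, ρ⟩ := q
  by_cases hij : i = j
  swap
  · rw [if_neg (fun h => hij (congrArg Prod.fst h))]
    calc halfVertex k (i, σ) * halfVertex k (j, ρ)
        = halfVertex k (i, σ) * (vertex k i * vertex k j) * halfVertex k (j, ρ) := by
          rw [mul_assoc, mul_assoc, vertex_mul_halfVertex hQ, ← mul_assoc,
            halfVertex_mul_vertex hQ]
      _ = 0 := by rw [vertex_mul_vertex, if_neg hij, mul_zero, zero_mul]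
  subst hij
  by_cases hi : Q.specialAt i
  · have key := half_mul_half_of_sq_eq h2 (by simp [vertex_mul_vertex])
      (vertex_mul_loop hQ hi) (loop_mul_vertex hQ hi) (loop_mul_loop (k := k) hQ hi)
    rcases σ with _ | b <;> rcases ρ with _ | c <;>
      simp only [halfVertex, if_pos hi, zero_mul, mul_zero, key, Prod.mk.injEq,
        Option.some.injEq, true_and, ite_self, reduceCtorEq, ite_false]
  · rcases σ with _ | b <;> rcases ρ with _ | c <;> simp [halfVertex, hi, vertex_mul_vertex]

theorem halfVertex_mul_self (hQ : Q.SkewedGentle) (h2 : (2 : k) ≠ 0) (p : Q.V × Option Bool) :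
    halfVertex k p * halfVertex k p = halfVertex k p := by
  rw [halfVertex_mul_halfVertex hQ h2, if_pos rfl]

theorem sum_halfVertex (h2 : (2 : k) ≠ 0) (i : Q.V) :
    ∑ σ : Option Bool, halfVertex k (i, σ) = vertex k i := by
  by_cases hi : Q.specialAt i <;>
    simp only [Fintype.sum_option, Fintype.sum_bool, halfVertex, hi, ↓reduceIte,
      Bool.false_eq_true, zero_add, add_zero, half_add_add_half_sub h2]

end PathAlgebra

section GabrielAlgebra

variable {k Q} [Fintype Q.V] [Fintype Q.A]

variable (k) in
noncomputable def vertexT (p : Q.V × Option Bool) : kAlgT k Q :=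
  if h : Q.SOK p.1 p.2 then RingQuot.mkAlgHom k (PARelT k Q) (FreeAlgebra.ι k (Sum.inl ⟨p, h⟩))
  else 0

variable (k) in
noncomputable def arrowT {a : Q.A} (ha : ¬ Q.special a) (τ σ : Option Bool) : kAlgT k Q :=
  if h : Q.SOK (Q.tgt a).1 τ ∧ Q.SOK (Q.src a).1 σ then
    RingQuot.mkAlgHom k (PARelT k Q) (FreeAlgebra.ι k (Sum.inr ⟨(a, τ, σ), ha, h.1, h.2⟩))
  else 0

theorem vertexT_of_SOK {p : Q.V × Option Bool} (h : Q.SOK p.1 p.2) :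
    vertexT k p = RingQuot.mkAlgHom k (PARelT k Q) (FreeAlgebra.ι k (Sum.inl ⟨p, h⟩)) :=
  dif_pos h

theorem vertexT_eq_zero {p : Q.V × Option Bool} (h : ¬ Q.SOK p.1 p.2) : vertexT k p = 0 :=
  dif_neg h

theorem vertexT_mul_vertexT (p q : Q.V × Option Bool) :
    vertexT k p * vertexT k q = if p = q then vertexT k p else 0 := by
  by_cases hp : Q.SOK p.1 p.2
  · by_cases hq : Q.SOK q.1 q.2
    · have := RingQuot.mkAlgHom_rel k (PARelT.ee (k := k) ⟨p, hp⟩ ⟨q, hq⟩)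
      simp only [map_mul, apply_ite (RingQuot.mkAlgHom k (PARelT k Q)), map_zero] at this
      rw [vertexT_of_SOK hp, vertexT_of_SOK hq, this]
      exact if_congr Subtype.mk_eq_mk rfl rfl
    · rw [vertexT_eq_zero hq, mul_zero]
      split_ifs with hpq
      · exact (vertexT_eq_zero (hpq ▸ hq)).symm
      · rfl
  · simp [vertexT_eq_zero hp]

theorem sum_vertexT : ∑ p, vertexT k p = (1 : kAlgT k Q) := by
  simpa [vertexT, map_sum, apply_dite (RingQuot.mkAlgHom k (PARelT k Q))] using
    RingQuot.mkAlgHom_rel k (PARelT.one (k := k) (Q := Q))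

section Arrow

variable {a : Q.A} (ha : ¬ Q.special a) (τ σ : Option Bool)

theorem arrowT_of_SOK (h : Q.SOK (Q.tgt a).1 τ ∧ Q.SOK (Q.src a).1 σ) :
    arrowT k ha τ σ = RingQuot.mkAlgHom k (PARelT k Q)
      (FreeAlgebra.ι k (Sum.inr ⟨(a, τ, σ), ha, h.1, h.2⟩)) :=
  dif_pos h

theorem arrowT_eq_zero (h : ¬ (Q.SOK (Q.tgt a).1 τ ∧ Q.SOK (Q.src a).1 σ)) :
    arrowT k ha τ σ = 0 :=
  dif_neg h

theorem vertexT_tgt_mul_arrowT :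
    vertexT k ((Q.tgt a).1, τ) * arrowT k ha τ σ = arrowT k ha τ σ := by
  by_cases h : Q.SOK (Q.tgt a).1 τ ∧ Q.SOK (Q.src a).1 σ
  · rw [vertexT_of_SOK h.1, arrowT_of_SOK ha τ σ h, ← map_mul]
    exact RingQuot.mkAlgHom_rel k (PARelT.et (k := k) ⟨(a, τ, σ), ha, h.1, h.2⟩)
  · rw [arrowT_eq_zero ha τ σ h, mul_zero]

theorem arrowT_mul_vertexT_src :
    arrowT k ha τ σ * vertexT k ((Q.src a).1, σ) = arrowT k ha τ σ := by
  by_cases h : Q.SOK (Q.tgt a).1 τ ∧ Q.SOK (Q.src a).1 σ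
  · rw [vertexT_of_SOK h.2, arrowT_of_SOK ha τ σ h, ← map_mul]
    exact RingQuot.mkAlgHom_rel k (PARelT.es (k := k) ⟨(a, τ, σ), ha, h.1, h.2⟩)
  · rw [arrowT_eq_zero ha τ σ h, zero_mul]

theorem vertexT_mul_arrowT (p : Q.V × Option Bool) :
    vertexT k p * arrowT k ha τ σ = if p = ((Q.tgt a).1, τ) then arrowT k ha τ σ else 0 := by
  rw [← vertexT_tgt_mul_arrowT, ← mul_assoc, vertexT_mul_vertexT]
  split_ifs with hp
  · rw [hp]
  · rw [zero_mul]

theorem arrowT_mul_vertexT (p : Q.V × Option Bool) :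
    arrowT k ha τ σ * vertexT k p = if p = ((Q.src a).1, σ) then arrowT k ha τ σ else 0 := by
  rw [← arrowT_mul_vertexT_src, mul_assoc, vertexT_mul_vertexT]
  split_ifs with h1 h2 h2
  · rw [arrowT_mul_vertexT_src]
  · exact absurd h1.symm h2
  · exact absurd h2.symm h1
  · rw [mul_zero]

end Arrow

theorem arrowT_mul_arrowT_of_ne {a b : Q.A} (ha : ¬ Q.special a) (hb : ¬ Q.special b)
    (hab : (Q.src a).1 = (Q.tgt b).1) {σ σ' : Option Bool} (h : σ ≠ σ')
    (τ ρ : Option Bool) :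
    arrowT k ha τ σ * arrowT k hb σ' ρ = 0 := by
  rw [← arrowT_mul_vertexT_src ha, mul_assoc, vertexT_mul_arrowT, hab,
    if_neg (by simpa using h), mul_zero]

theorem sum_arrowT_mul_arrowT {a b : Q.A} (ha : ¬ Q.special a) (hb : ¬ Q.special b)
    (hab : Q.src a = Q.tgt b) (τ ρ : Option Bool) :
    ∑ σ, arrowT k ha τ σ * arrowT k hb σ ρ = 0 := by
  have hab₁ : (Q.src a).1 = (Q.tgt b).1 := congrArg Prod.fst hab
  by_cases hτ : Q.SOK (Q.tgt a).1 τ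
  · by_cases hρ : Q.SOK (Q.src b).1 ρ
    · have := RingQuot.mkAlgHom_rel k (PARelT.rtilde (k := k) a b ha hb hab τ hτ ρ hρ)
      rw [map_sum, map_zero] at this
      refine Eq.trans (Finset.sum_congr rfl fun σ _ => ?_) this
      by_cases hσ : Q.SOK (Q.tgt b).1 σ
      · rw [dif_pos hσ, map_mul, arrowT_of_SOK ha τ σ ⟨hτ, hab₁ ▸ hσ⟩,
          arrowT_of_SOK hb σ ρ ⟨hσ, hρ⟩]
      · rw [dif_neg hσ, map_zero, arrowT_eq_zero hb σ ρ (fun h => hσ h.1), mul_zero]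
    · exact Finset.sum_eq_zero fun σ _ => by
        rw [arrowT_eq_zero hb σ ρ (fun h => hρ h.2), mul_zero]
  · exact Finset.sum_eq_zero fun σ _ => by
      rw [arrowT_eq_zero ha τ σ (fun h => hτ h.1), zero_mul]


theorem sum_vertexT_of_specialAt {i : Q.V} (hi : Q.specialAt i) :
    ∑ σ, vertexT k (i, σ) = vertexT k (i, some true) + vertexT k (i, some false) := by
  rw [Fintype.sum_option, Fintype.sum_bool, vertexT_eq_zero (fun h => by simp_all [PolQuiv.SOK]),
    zero_add]

theorem sum_vertexT_of_not_specialAt {i : Q.V} (hi : ¬ Q.specialAt i) :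
    ∑ σ, vertexT k (i, σ) = vertexT k (i, none) := by
  rw [Fintype.sum_option, Fintype.sum_bool, vertexT_eq_zero (p := (i, some true))
    (fun h => by simp_all [PolQuiv.SOK]), vertexT_eq_zero (p := (i, some false))
    (fun h => by simp_all [PolQuiv.SOK]), add_zero, add_zero]

theorem sum_vertexT_mul_sum_vertexT (i j : Q.V) :
    (∑ σ, vertexT k (i, σ)) * ∑ ρ, vertexT k (j, ρ) =
      if i = j then ∑ σ, vertexT k (i, σ) else 0 := by
  simp only [Finset.sum_mul_sum, vertexT_mul_vertexT, Prod.mk.injEq]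
  split_ifs with hij
  · subst hij
    simp
  · simp [hij]

end GabrielAlgebra

section Phi

variable {k Q} [Fintype Q.V] [Fintype Q.A]

variable (k) in
noncomputable def phiArrow (a : Q.A) : kAlgT k Q :=
  if ha : Q.special a then
    vertexT k ((Q.src a).1, some true) - vertexT k ((Q.src a).1, some false)
  else ∑ τ, ∑ σ, arrowT k ha τ σ

theorem phiArrow_of_special {a : Q.A} (ha : Q.special a) :
    phiArrow k a = vertexT k ((Q.src a).1, some true) - vertexT k ((Q.src a).1, some false) :=
  dif_pos ha

theorem phiArrow_of_not_special {a : Q.A} (ha : ¬ Q.special a) :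
    phiArrow k a = ∑ τ, ∑ σ, arrowT k ha τ σ :=
  dif_neg ha

theorem sum_vertexT_tgt_mul_arrowT {a : Q.A} (ha : ¬ Q.special a) (τ σ : Option Bool) :
    (∑ ρ, vertexT k ((Q.tgt a).1, ρ)) * arrowT k ha τ σ = arrowT k ha τ σ := by
  simp only [Finset.sum_mul, vertexT_mul_arrowT, Prod.mk.injEq, true_and, Finset.sum_ite_eq',
    Finset.mem_univ, if_true]

theorem arrowT_mul_sum_vertexT_src {a : Q.A} (ha : ¬ Q.special a) (τ σ : Option Bool) :
    arrowT k ha τ σ * ∑ ρ, vertexT k ((Q.src a).1, ρ) = arrowT k ha τ σ := by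
  simp only [Finset.mul_sum, arrowT_mul_vertexT, Prod.mk.injEq, true_and, Finset.sum_ite_eq',
    Finset.mem_univ, if_true]

theorem sum_vertexT_tgt_mul_phiArrow (hQ : Q.SkewedGentle) (a : Q.A) :
    (∑ σ, vertexT k ((Q.tgt a).1, σ)) * phiArrow k a = phiArrow k a := by
  by_cases ha : Q.special a
  · rw [phiArrow_of_special ha, ← hQ.2 a ha, sum_vertexT_of_specialAt ⟨a, ha, rfl⟩]
    simp [add_mul, mul_sub, vertexT_mul_vertexT]
  · simp only [phiArrow_of_not_special ha, Finset.mul_sum, sum_vertexT_tgt_mul_arrowT]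

theorem phiArrow_mul_sum_vertexT_src (a : Q.A) :
    phiArrow k a * ∑ σ, vertexT k ((Q.src a).1, σ) = phiArrow k a := by
  by_cases ha : Q.special a
  · rw [phiArrow_of_special ha, sum_vertexT_of_specialAt ⟨a, ha, rfl⟩]
    simp [mul_add, sub_mul, vertexT_mul_vertexT, ← sub_eq_add_neg]
  · simp only [phiArrow_of_not_special ha, Finset.sum_mul, arrowT_mul_sum_vertexT_src]

theorem phiArrow_mul_self_of_special {ε : Q.A} (hε : Q.special ε) :
    phiArrow k ε * phiArrow k ε = ∑ σ, vertexT k ((Q.src ε).1, σ) := by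
  rw [phiArrow_of_special hε, sum_vertexT_of_specialAt ⟨ε, hε, rfl⟩]
  simp [sub_mul, mul_sub, vertexT_mul_vertexT]

theorem arrowT_mul_phiArrow {a b : Q.A} (ha : ¬ Q.special a) (hb : ¬ Q.special b)
    (hab : (Q.src a).1 = (Q.tgt b).1) (τ σ : Option Bool) :
    arrowT k ha τ σ * phiArrow k b = ∑ ρ, arrowT k ha τ σ * arrowT k hb σ ρ := by
  rw [phiArrow_of_not_special hb, Finset.mul_sum, Finset.sum_eq_single σ]
  · rw [Finset.mul_sum]
  · intro σ' _ h
    rw [Finset.mul_sum]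
    exact Finset.sum_eq_zero fun ρ _ => arrowT_mul_arrowT_of_ne ha hb hab (Ne.symm h) τ ρ
  · simp

theorem phiArrow_mul_phiArrow_eq_zero {a b : Q.A} (ha : ¬ Q.special a) (hb : ¬ Q.special b)
    (hab : Q.src a = Q.tgt b) : phiArrow k a * phiArrow k b = 0 := by
  rw [phiArrow_of_not_special ha, Finset.sum_mul]
  refine Finset.sum_eq_zero fun τ _ => ?_
  simp only [Finset.sum_mul, arrowT_mul_phiArrow ha hb (congrArg Prod.fst hab)]
  rw [Finset.sum_comm]
  exact Finset.sum_eq_zero fun ρ _ => sum_arrowT_mul_arrowT ha hb hab τ ρ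

variable (k) in
noncomputable def phiFree : FreeAlgebra k (GenQ Q) →ₐ[k] kAlgT k Q :=
  FreeAlgebra.lift k (Sum.elim (fun i => ∑ σ, vertexT k (i, σ)) (phiArrow k))

theorem phiFree_vertex (i : Q.V) :
    phiFree k (FreeAlgebra.ι k (Sum.inl i)) = ∑ σ, vertexT k (i, σ) :=
  FreeAlgebra.lift_ι_apply _ _

theorem phiFree_arrow (a : Q.A) : phiFree k (FreeAlgebra.ι k (Sum.inr a)) = phiArrow k a :=
  FreeAlgebra.lift_ι_apply _ _

theorem phiFree_rel (hQ : Q.SkewedGentle) ⦃x y : FreeAlgebra k (GenQ Q)⦄ (h : PARel k Q x y) :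
    phiFree k x = phiFree k y := by
  induction h with
  | ee i j =>
    rw [map_mul, phiFree_vertex, phiFree_vertex, sum_vertexT_mul_sum_vertexT,
      apply_ite (phiFree k), phiFree_vertex, map_zero]
  | et a => rw [map_mul, phiFree_vertex, phiFree_arrow, sum_vertexT_tgt_mul_phiArrow hQ]
  | es a => rw [map_mul, phiFree_vertex, phiFree_arrow, phiArrow_mul_sum_vertexT_src]
  | one =>
    rw [map_sum, map_one, ← sum_vertexT, Fintype.sum_prod_type]
    simp only [phiFree_vertex]
  | zrel a b ha hb hab =>
    rw [map_mul, phiFree_arrow, phiFree_arrow, phiArrow_mul_phiArrow_eq_zero ha hb hab, map_zero]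
  | srel ε hε =>
    rw [map_mul, phiFree_arrow, phiFree_arrow, phiFree_vertex, hQ.dual_eq_self hε,
      phiArrow_mul_self_of_special hε]

variable (k) in
noncomputable def phi (hQ : Q.SkewedGentle) : kAlg k Q →ₐ[k] kAlgT k Q :=
  RingQuot.liftAlgHom k ⟨phiFree k, phiFree_rel hQ⟩

theorem phi_vertex (hQ : Q.SkewedGentle) (i : Q.V) :
    phi k hQ (vertex k i) = ∑ σ, vertexT k (i, σ) :=
  (RingQuot.liftAlgHom_mkAlgHom_apply _ _ _ _).trans (phiFree_vertex i)

theorem phi_arrow (hQ : Q.SkewedGentle) (a : Q.A) : phi k hQ (arrow k a) = phiArrow k a :=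
  (RingQuot.liftAlgHom_mkAlgHom_apply _ _ _ _).trans (phiFree_arrow a)

end Phi

section Psi

variable {k Q} [Fintype Q.V]

variable (k) in
noncomputable def psiFree : FreeAlgebra k (GenT Q) →ₐ[k] kAlg k Q :=
  FreeAlgebra.lift k (Sum.elim (fun v => halfVertex k v.1) fun t =>
    halfVertex k ((Q.tgt t.1.1).1, t.1.2.1) * arrow k t.1.1 *
      halfVertex k ((Q.src t.1.1).1, t.1.2.2))

theorem psiFree_vertex {p : Q.V × Option Bool} (h : Q.SOK p.1 p.2) :
    psiFree k (FreeAlgebra.ι k (Sum.inl ⟨p, h⟩)) = halfVertex k p :=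
  FreeAlgebra.lift_ι_apply _ _

theorem psiFree_arrow {a : Q.A} (ha : ¬ Q.special a) {τ σ : Option Bool}
    (h : Q.SOK (Q.tgt a).1 τ ∧ Q.SOK (Q.src a).1 σ) :
    psiFree k (FreeAlgebra.ι k (Sum.inr ⟨(a, τ, σ), ha, h.1, h.2⟩)) =
      halfVertex k ((Q.tgt a).1, τ) * arrow k a * halfVertex k ((Q.src a).1, σ) :=
  FreeAlgebra.lift_ι_apply _ _

variable [Fintype Q.A]

theorem psiFree_rel (hQ : Q.SkewedGentle) (h2 : (2 : k) ≠ 0) ⦃x y : FreeAlgebra k (GenT Q)⦄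
    (h : PARelT k Q x y) : psiFree k x = psiFree k y := by
  induction h with
  | ee v w =>
    obtain ⟨p, hp⟩ := v
    obtain ⟨q, hq⟩ := w
    rw [map_mul, psiFree_vertex, psiFree_vertex, halfVertex_mul_halfVertex hQ h2,
      apply_ite (psiFree k), psiFree_vertex, map_zero]
    exact if_congr Subtype.mk_eq_mk.symm rfl rfl
  | et t =>
    obtain ⟨⟨a, τ, σ⟩, ha, hτ, hσ⟩ := t
    rw [map_mul, psiFree_vertex, psiFree_arrow ha ⟨hτ, hσ⟩, ← mul_assoc, ← mul_assoc,
      halfVertex_mul_self hQ h2]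
  | es t =>
    obtain ⟨⟨a, τ, σ⟩, ha, hτ, hσ⟩ := t
    rw [map_mul, psiFree_vertex, psiFree_arrow ha ⟨hτ, hσ⟩, mul_assoc,
      halfVertex_mul_self hQ h2]
  | one =>
    rw [map_sum, map_one, ← sum_vertex, Fintype.sum_prod_type]
    refine Finset.sum_congr rfl fun i _ => ?_
    rw [← sum_halfVertex h2 i]
    refine Finset.sum_congr rfl fun σ _ => ?_
    split_ifs with h
    · exact psiFree_vertex h
    · rw [map_zero, halfVertex_eq_zero h]
  | rtilde a b ha hb hab τ hτ ρ hρ =>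
    have hab₁ : (Q.src a).1 = (Q.tgt b).1 := congrArg Prod.fst hab
    rw [map_sum, map_zero]
    calc _ = ∑ σ, halfVertex k ((Q.tgt a).1, τ) * (arrow k a * (halfVertex k ((Q.tgt b).1, σ) *
            (arrow k b * halfVertex k ((Q.src b).1, ρ)))) := by
          refine Finset.sum_congr rfl fun σ _ => ?_
          split_ifs with hσ
          · rw [map_mul, psiFree_arrow ha ⟨hτ, hab₁ ▸ hσ⟩, psiFree_arrow hb ⟨hσ, hρ⟩,
              hab₁]
            simp only [mul_assoc]
            rw [← mul_assoc (halfVertex k _) (halfVertex k _), halfVertex_mul_self hQ h2]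
          · rw [map_zero, halfVertex_eq_zero (p := ((Q.tgt b).1, σ)) hσ, zero_mul, mul_zero,
              mul_zero]
      _ = halfVertex k ((Q.tgt a).1, τ) * (arrow k a * arrow k b *
            halfVertex k ((Q.src b).1, ρ)) := by
          rw [← Finset.mul_sum, ← Finset.mul_sum, ← Finset.sum_mul, sum_halfVertex h2, ← hab₁,
            ← mul_assoc (arrow k a) (vertex k _), arrow_mul_vertex_src, mul_assoc]
      _ = 0 := by rw [arrow_mul_arrow_eq_zero ha hb hab, zero_mul, mul_zero]

variable (k) in
noncomputable def psi (hQ : Q.SkewedGentle) (h2 : (2 : k) ≠ 0) : kAlgT k Q →ₐ[k] kAlg k Q :=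
  RingQuot.liftAlgHom k ⟨psiFree k, psiFree_rel hQ h2⟩

theorem psi_mk_vertex (hQ : Q.SkewedGentle) (h2 : (2 : k) ≠ 0) {p : Q.V × Option Bool}
    (h : Q.SOK p.1 p.2) :
    psi k hQ h2 (RingQuot.mkAlgHom k (PARelT k Q) (FreeAlgebra.ι k (Sum.inl ⟨p, h⟩))) =
      halfVertex k p :=
  (RingQuot.liftAlgHom_mkAlgHom_apply _ _ _ _).trans (psiFree_vertex h)

theorem psi_vertexT (hQ : Q.SkewedGentle) (h2 : (2 : k) ≠ 0) (p : Q.V × Option Bool) :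
    psi k hQ h2 (vertexT k p) = halfVertex k p := by
  by_cases h : Q.SOK p.1 p.2
  · rw [vertexT_of_SOK h, psi_mk_vertex]
  · rw [vertexT_eq_zero h, map_zero, halfVertex_eq_zero h]

theorem psi_arrowT (hQ : Q.SkewedGentle) (h2 : (2 : k) ≠ 0) {a : Q.A} (ha : ¬ Q.special a)
    (τ σ : Option Bool) :
    psi k hQ h2 (arrowT k ha τ σ) =
      halfVertex k ((Q.tgt a).1, τ) * arrow k a * halfVertex k ((Q.src a).1, σ) := by
  by_cases h : Q.SOK (Q.tgt a).1 τ ∧ Q.SOK (Q.src a).1 σ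
  · rw [arrowT_of_SOK ha τ σ h]
    exact (RingQuot.liftAlgHom_mkAlgHom_apply _ _ _ _).trans (psiFree_arrow ha h)
  · rw [arrowT_eq_zero ha τ σ h, map_zero]
    by_cases hτ : Q.SOK (Q.tgt a).1 τ
    · rw [halfVertex_eq_zero (p := ((Q.src a).1, σ)) (fun hσ => h ⟨hτ, hσ⟩), mul_zero]
    · rw [halfVertex_eq_zero (p := ((Q.tgt a).1, τ)) hτ, zero_mul, zero_mul]

theorem psi_phiArrow (hQ : Q.SkewedGentle) (h2 : (2 : k) ≠ 0) (a : Q.A) :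
    psi k hQ h2 (phiArrow k a) = arrow k a := by
  by_cases ha : Q.special a
  · rw [phiArrow_of_special ha, map_sub, psi_vertexT, psi_vertexT,
      halfVertex_src_of_special hQ ha, halfVertex_src_of_special hQ ha, if_pos rfl,
      if_neg Bool.false_ne_true]
    exact half_add_sub_half_sub h2
  · simp only [phiArrow_of_not_special ha, map_sum, psi_arrowT, ← Finset.mul_sum,
      ← Finset.sum_mul, sum_halfVertex h2, vertex_tgt_mul_arrow, arrow_mul_vertex_src]

theorem phi_loop (hQ : Q.SkewedGentle) {i : Q.V} (hi : Q.specialAt i) :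
    phi k hQ (loop k i) = vertexT k (i, some true) - vertexT k (i, some false) := by
  obtain ⟨ε, hε, rfl⟩ := hi
  rw [loop_src_of_special hQ hε, phi_arrow, phiArrow_of_special hε]

theorem phi_halfVertex (hQ : Q.SkewedGentle) (h2 : (2 : k) ≠ 0) (p : Q.V × Option Bool) :
    phi k hQ (halfVertex k p) = vertexT k p := by
  obtain ⟨i, _ | b⟩ := p <;> by_cases hi : Q.specialAt i
  · rw [halfVertex, if_pos hi, map_zero, vertexT_eq_zero (by simp [PolQuiv.SOK, hi])]
  · rw [halfVertex, if_neg hi, phi_vertex, sum_vertexT_of_not_specialAt hi]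
  · rw [halfVertex, if_pos hi, map_smul, apply_ite (phi k hQ), map_add, map_sub, phi_vertex,
      phi_loop hQ hi, sum_vertexT_of_specialAt hi]
    cases b
    · exact half_smul_add_sub_sub h2 _ _
    · exact half_smul_add_add_sub h2 _ _
  · rw [halfVertex, if_neg hi, map_zero, vertexT_eq_zero (by simp [PolQuiv.SOK, hi])]

theorem vertexT_mul_phiArrow_mul_vertexT {a : Q.A} (ha : ¬ Q.special a) (τ σ : Option Bool) :
    vertexT k ((Q.tgt a).1, τ) * phiArrow k a * vertexT k ((Q.src a).1, σ) =
      arrowT k ha τ σ := by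
  simp only [phiArrow_of_not_special ha, Finset.mul_sum, Finset.sum_mul, vertexT_mul_arrowT,
    arrowT_mul_vertexT, Prod.mk.injEq, true_and, Finset.sum_ite_irrel,
    Finset.sum_const_zero, Finset.sum_ite_eq, Finset.mem_univ, if_true]

theorem phi_comp_psi (hQ : Q.SkewedGentle) (h2 : (2 : k) ≠ 0) :
    (phi k hQ).comp (psi k hQ h2) = AlgHom.id k (kAlgT k Q) := by
  apply RingQuot.ringQuot_ext'
  apply FreeAlgebra.hom_ext
  funext g
  simp only [Function.comp_apply, AlgHom.comp_apply, AlgHom.id_apply]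
  rcases g with ⟨p, h⟩ | ⟨⟨a, τ, σ⟩, ha, hτ, hσ⟩
  · rw [psi_mk_vertex, phi_halfVertex hQ h2, vertexT_of_SOK h]
  · dsimp only at ha hτ hσ
    rw [← arrowT_of_SOK ha τ σ ⟨hτ, hσ⟩, psi_arrowT hQ h2, map_mul, map_mul,
      phi_halfVertex hQ h2, phi_halfVertex hQ h2, phi_arrow, vertexT_mul_phiArrow_mul_vertexT]

theorem psi_comp_phi (hQ : Q.SkewedGentle) (h2 : (2 : k) ≠ 0) :
    (psi k hQ h2).comp (phi k hQ) = AlgHom.id k (kAlg k Q) := by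
  apply RingQuot.ringQuot_ext'
  apply FreeAlgebra.hom_ext
  funext g
  simp only [Function.comp_apply, AlgHom.comp_apply, AlgHom.id_apply]
  rcases g with i | a
  · change psi k hQ h2 (phi k hQ (vertex k i)) = vertex k i
    rw [phi_vertex, map_sum]
    simp only [psi_vertexT, sum_halfVertex h2]
  · change psi k hQ h2 (phi k hQ (arrow k a)) = arrow k a
    rw [phi_arrow, psi_phiArrow hQ h2]

end Psi

/-- **The isomorphism `φ_Q : kQ → kQ̃/⟨R̃⟩`.**  Let `Q` be a skewed-gentle polarized
quiver and `k` a field with `char k ≠ 2`.  The map determined by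
`e_i ↦ Σ_{σ∈S(i)} e_{(i,σ)}`, `α ↦ Σ_{τ,σ} _τα_σ` for ordinary arrows, and
`ε_i ↦ e_{(i,+)} - e_{(i,-)}` for special loops, is a `k`-algebra isomorphism whose
inverse satisfies `φ_Q⁻¹(e_{(i,±)}) = (1/2)(e_i ± ε_i)`. -/
theorem statement_18 (Q : PolQuiv) [Fintype Q.V] [Fintype Q.A]
    (hQ : Q.SkewedGentle) (hchar : (2 : k) ≠ 0) :
    ∃ φ : kAlg k Q ≃ₐ[k] kAlgT k Q,
      -- values on the trivial paths at ordinary vertices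
      (∀ i : Q.V, ∀ h : ¬ Q.specialAt i,
        φ (RingQuot.mkAlgHom k (PARel k Q) (FreeAlgebra.ι k (Sum.inl i))) =
          RingQuot.mkAlgHom k (PARelT k Q)
            (FreeAlgebra.ι k (Sum.inl ⟨(i, none), Or.inr ⟨h, rfl⟩⟩))) ∧
      -- values on the trivial paths at special vertices
      (∀ i : Q.V, ∀ h : Q.specialAt i,
        φ (RingQuot.mkAlgHom k (PARel k Q) (FreeAlgebra.ι k (Sum.inl i))) =
          RingQuot.mkAlgHom k (PARelT k Q)
            (FreeAlgebra.ι k (Sum.inl ⟨(i, some true), Or.inl ⟨h, Or.inl rfl⟩⟩)) +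
          RingQuot.mkAlgHom k (PARelT k Q)
            (FreeAlgebra.ι k (Sum.inl ⟨(i, some false), Or.inl ⟨h, Or.inr rfl⟩⟩))) ∧
      -- values on the ordinary arrows
      (∀ a : Q.A, ∀ ha : ¬ Q.special a,
        φ (RingQuot.mkAlgHom k (PARel k Q) (FreeAlgebra.ι k (Sum.inr a))) =
          ∑ τ : Option Bool, ∑ σ : Option Bool,
            if h : Q.SOK (Q.tgt a).1 τ ∧ Q.SOK (Q.src a).1 σ then
              RingQuot.mkAlgHom k (PARelT k Q)
                (FreeAlgebra.ι k (Sum.inr ⟨(a, τ, σ), ha, h.1, h.2⟩))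
            else 0) ∧
      -- values on the special loops
      (∀ ε : Q.A, ∀ hε : Q.special ε,
        φ (RingQuot.mkAlgHom k (PARel k Q) (FreeAlgebra.ι k (Sum.inr ε))) =
          RingQuot.mkAlgHom k (PARelT k Q)
            (FreeAlgebra.ι k (Sum.inl
              ⟨((Q.src ε).1, some true), Or.inl ⟨⟨ε, hε, rfl⟩, Or.inl rfl⟩⟩)) -
          RingQuot.mkAlgHom k (PARelT k Q)
            (FreeAlgebra.ι k (Sum.inl
              ⟨((Q.src ε).1, some false), Or.inl ⟨⟨ε, hε, rfl⟩, Or.inr rfl⟩⟩))) ∧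
      -- the inverse on the idempotents `e_{(i,±)}`
      (∀ ε : Q.A, ∀ hε : Q.special ε,
        φ.symm (RingQuot.mkAlgHom k (PARelT k Q)
            (FreeAlgebra.ι k (Sum.inl
              ⟨((Q.src ε).1, some true), Or.inl ⟨⟨ε, hε, rfl⟩, Or.inl rfl⟩⟩))) =
          (2⁻¹ : k) • (RingQuot.mkAlgHom k (PARel k Q) (FreeAlgebra.ι k (Sum.inl (Q.src ε).1)) +
            RingQuot.mkAlgHom k (PARel k Q) (FreeAlgebra.ι k (Sum.inr ε))) ∧
        φ.symm (RingQuot.mkAlgHom k (PARelT k Q)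
            (FreeAlgebra.ι k (Sum.inl
              ⟨((Q.src ε).1, some false), Or.inl ⟨⟨ε, hε, rfl⟩, Or.inr rfl⟩⟩))) =
          (2⁻¹ : k) • (RingQuot.mkAlgHom k (PARel k Q) (FreeAlgebra.ι k (Sum.inl (Q.src ε).1)) -
            RingQuot.mkAlgHom k (PARel k Q) (FreeAlgebra.ι k (Sum.inr ε)))) := by
  refine ⟨AlgEquiv.ofAlgHom (phi k hQ) (psi k hQ hchar) (phi_comp_psi hQ hchar)
    (psi_comp_phi hQ hchar), fun i h => ?_, fun i h => ?_, fun a ha => ?_, fun ε hε => ?_,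
    fun ε hε => ⟨?_, ?_⟩⟩
  · exact (phi_vertex hQ i).trans ((sum_vertexT_of_not_specialAt h).trans (vertexT_of_SOK _))
  · exact (phi_vertex hQ i).trans ((sum_vertexT_of_specialAt h).trans
      (congrArg₂ (· + ·) (vertexT_of_SOK _) (vertexT_of_SOK _)))
  · exact (phi_arrow hQ a).trans (phiArrow_of_not_special ha)
  · exact (phi_arrow hQ ε).trans ((phiArrow_of_special hε).trans
      (congrArg₂ (· - ·) (vertexT_of_SOK _) (vertexT_of_SOK _)))
  · exact (psi_mk_vertex hQ hchar _).trans (halfVertex_src_of_special hQ hε true)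
  · exact (psi_mk_vertex hQ hchar _).trans (halfVertex_src_of_special hQ hε false)

end SG
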